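/- Let (Ω, P) be a probability space, E a measurable space, and X, Y : Ω → E random variables such that the pair (X, Y) is exchangeable, i.e., the joint law of (X, Y) equals the joint law of (Y, X). Let f : E → ℝ be measurable with f(X) integrable, and assume P(f(X) = f(Y)) = 0. Define Z = f(X)·1{f(X) > f(Y)} − f(Y)·1{f(Y) ≥ f(X)}. Then E[Z] = 0. -/

import Mathlib

/-!
The payoff `Z = Φ(f X, f Y)`, where `Φ(s, t) = s` if `s > t` and `Φ(s, t) = -t` otherwise, is
antisymmetric off the diagonal: `Φ(t, s) = -Φ(s, t)` whenever `s ≠ t`. Exchangeability gives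
`E[Φ(f X, f Y)] = E[Φ(f Y, f X)]`, and since ties are null the right side is `-E[Φ(f X, f Y)]`.
-/

open MeasureTheory ProbabilityTheory

/-- The paper's `sign(argmax(s, t)) · max(s, t)`, with a tie counted as a win for `t`. -/
noncomputable def signedMax (s t : ℝ) : ℝ :=
  s * (if s > t then (1 : ℝ) else 0) - t * (if t ≥ s then (1 : ℝ) else 0)

theorem signedMax_swap {s t : ℝ} (hst : s ≠ t) : signedMax t s = -signedMax s t := by
  rcases hst.lt_or_gt with h | h
  · simp [signedMax, h, h.le, not_lt.mpr h.le]
  · simp [signedMax, h, not_le.mpr h, not_lt.mpr h.le]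

theorem measurable_signedMax : Measurable fun p : ℝ × ℝ => signedMax p.1 p.2 := by
  refine (measurable_fst.mul ?_).sub (measurable_snd.mul ?_)
  · exact Measurable.ite (measurableSet_lt measurable_snd measurable_fst)
      measurable_const measurable_const
  · exact Measurable.ite (measurableSet_le measurable_fst measurable_snd)
      measurable_const measurable_const

theorem integral_comp_eq_zero_of_identDistrib_of_ae_eq_neg
    {Ω α E : Type*} [MeasurableSpace Ω] [MeasurableSpace α]
    [NormedAddCommGroup E] [NormedSpace ℝ E] [MeasurableSpace E] [BorelSpace E]
    {μ : Measure Ω} {U V : Ω → α} (hUV : IdentDistrib U V μ μ)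
    {g : α → E} (hg : Measurable g) (hneg : ∀ᵐ ω ∂μ, g (V ω) = -g (U ω)) :
    ∫ ω, g (U ω) ∂μ = 0 := by
  have : IsAddTorsionFree E := .of_isTorsionFree ℝ E
  rw [← self_eq_neg, ← integral_neg]
  calc ∫ ω, g (U ω) ∂μ = ∫ ω, g (V ω) ∂μ := (hUV.comp hg).integral_eq
    _ = ∫ ω, -g (U ω) ∂μ := integral_congr_ae hneg

theorem hcore_init_mean_zero_of_exchangeable_general
    {Ω E : Type*} [MeasurableSpace Ω] [MeasurableSpace E]
    (P : Measure Ω)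
    (X Y : Ω → E)
    (hexch : IdentDistrib (fun ω => (X ω, Y ω)) (fun ω => (Y ω, X ω)) P P)
    (f : E → ℝ) (hf : Measurable f)
    (hnull : P {ω | f (X ω) = f (Y ω)} = 0)
    (Z : Ω → ℝ)
    (hZ : Z = fun ω =>
      f (X ω) * (if f (X ω) > f (Y ω) then (1 : ℝ) else 0)
        - f (Y ω) * (if f (Y ω) ≥ f (X ω) then (1 : ℝ) else 0)) :
    ∫ ω, Z ω ∂P = 0 := by
  have hexch_f : IdentDistrib (fun ω => (f (X ω), f (Y ω))) (fun ω => (f (Y ω), f (X ω))) P P :=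
    hexch.comp (hf.prodMap hf)
  have hno_ties : ∀ᵐ ω ∂P, f (X ω) ≠ f (Y ω) := measure_eq_zero_iff_ae_notMem.mp hnull
  subst hZ
  exact integral_comp_eq_zero_of_identDistrib_of_ae_eq_neg hexch_f measurable_signedMax
    (hno_ties.mono fun ω => signedMax_swap)

/-- If the pair `(X, Y)` is exchangeable (the joint law of `(X, Y)` equals that of
`(Y, X)`), `f` is measurable with `f ∘ X` integrable, and the event `f(X) = f(Y)`
is null, then `Z = f(X)·1{f(X) > f(Y)} − f(Y)·1{f(Y) ≥ f(X)}` has mean `0`. -/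
theorem hcore_init_mean_zero_of_exchangeable
    {Ω E : Type*} [MeasurableSpace Ω] [MeasurableSpace E]
    (P : Measure Ω) [IsProbabilityMeasure P]
    (X Y : Ω → E) (hX : Measurable X) (hY : Measurable Y)
    (hexch : IdentDistrib (fun ω => (X ω, Y ω)) (fun ω => (Y ω, X ω)) P P)
    (f : E → ℝ) (hf : Measurable f)
    (hint : Integrable (fun ω => f (X ω)) P)
    (hnull : P {ω | f (X ω) = f (Y ω)} = 0)
    (Z : Ω → ℝ)
    (hZ : Z = fun ω =>
      f (X ω) * (if f (X ω) > f (Y ω) then (1 : ℝ) else 0)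
        - f (Y ω) * (if f (Y ω) ≥ f (X ω) then (1 : ℝ) else 0)) :
    ∫ ω, Z ω ∂P = 0 :=
  hcore_init_mean_zero_of_exchangeable_general P X Y hexch f hf hnull Z hZ
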